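/- arXiv:2510.05859 — 8 statements merged into one kernel-verified Lean document; each statement's English description precedes it below -/
import Mathlib

section
/- (Darboux's theorem, first-integral part, for natural exponents.) Let P, Q ∈ ℂ[x,y], let r ∈ ℕ, and for each i = 1,…,r let Cᵢ, Kᵢ ∈ ℂ[x,y] satisfy ∂ₓCᵢ·Q − ∂_yCᵢ·P = Cᵢ·Kᵢ. If natural numbers n₁,…,n_r satisfy ∑ᵢ nᵢ·Kᵢ = 0 in ℂ[x,y], then the polynomial F = ∏ᵢ Cᵢ^{nᵢ} satisfies ∂ₓF·Q − ∂_yF·P = 0; that is, dF ∧ ω = 0, so F is a first integral of ω = P dx + Q dy. -/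
open MvPolynomial

private lemma darboux_pow (P Q A K : MvPolynomial (Fin 2) ℂ)
    (h : pderiv 0 A * Q - pderiv 1 A * P = A * K) (m : ℕ) :
    pderiv 0 (A ^ m) * Q - pderiv 1 (A ^ m) * P = (m : MvPolynomial (Fin 2) ℂ) * K * A ^ m := by
  cases m with
  | zero => simp
  | succ k =>
    have h0 : pderiv 0 (A ^ (k + 1)) = (k + 1) • A ^ k * pderiv 0 A :=
      (pderiv 0).leibniz_pow A (k + 1) |>.trans (by ring_nf; simp [smul_mul_assoc])
    have h1 : pderiv 1 (A ^ (k + 1)) = (k + 1) • A ^ k * pderiv 1 A :=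
      (pderiv 1).leibniz_pow A (k + 1) |>.trans (by ring_nf; simp [smul_mul_assoc])
    rw [h0, h1]
    have : (k + 1) • A ^ k * pderiv 0 A * Q - (k + 1) • A ^ k * pderiv 1 A * P
        = (k + 1) • A ^ k * (pderiv 0 A * Q - pderiv 1 A * P) := by ring
    rw [this, h]
    simp [nsmul_eq_mul]
    ring

private lemma darboux_prod (P Q : MvPolynomial (Fin 2) ℂ) (r : ℕ)
    (C K : Fin r → MvPolynomial (Fin 2) ℂ)
    (h : ∀ i, pderiv 0 (C i) * Q - pderiv 1 (C i) * P = C i * K i)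
    (n : Fin r → ℕ) (s : Finset (Fin r)) :
    pderiv 0 (∏ i ∈ s, C i ^ n i) * Q - pderiv 1 (∏ i ∈ s, C i ^ n i) * P
      = (∑ i ∈ s, (n i : MvPolynomial (Fin 2) ℂ) * K i) * ∏ i ∈ s, C i ^ n i := by
  induction s using Finset.induction_on with
  | empty => simp
  | insert a s hx ih =>
    rw [Finset.prod_insert hx, Finset.sum_insert hx]
    rw [(pderiv 0).leibniz, (pderiv 1).leibniz]
    simp only [smul_eq_mul]
    linear_combination (C a ^ n a) * ih + (∏ i ∈ s, C i ^ n i) * darboux_pow P Q (C a) (K a) (h a) (n a)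

/-- Darboux's theorem, first-integral part, for natural exponents: if the
natural-number combination of the cofactors vanishes, then `F = ∏ Cᵢ^{nᵢ}`
is a first integral, i.e. `dF ∧ ω = 0`. -/
theorem darboux_first_integral
    (P Q : MvPolynomial (Fin 2) ℂ) (r : ℕ)
    (C K : Fin r → MvPolynomial (Fin 2) ℂ)
    (h : ∀ i, pderiv 0 (C i) * Q - pderiv 1 (C i) * P = C i * K i)
    (n : Fin r → ℕ)
    (hrel : ∑ i, (n i : MvPolynomial (Fin 2) ℂ) * K i = 0) :
    pderiv 0 (∏ i, C i ^ n i) * Q - pderiv 1 (∏ i, C i ^ n i) * P = 0 := by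
  rw [darboux_prod P Q r C K h n Finset.univ, hrel, zero_mul]
end

section
/- (Darboux's theorem, integrating-factor part, for natural exponents.) Let P, Q ∈ ℂ[x,y], let r ∈ ℕ, and for each i = 1,…,r let Cᵢ, Kᵢ ∈ ℂ[x,y] satisfy ∂ₓCᵢ·Q − ∂_yCᵢ·P = Cᵢ·Kᵢ. If natural numbers n₁,…,n_r satisfy ∑ᵢ nᵢ·Kᵢ = −(∂ₓQ − ∂_yP) in ℂ[x,y], then the polynomial μ = ∏ᵢ Cᵢ^{nᵢ} satisfies ∂ₓ(μ·Q) = ∂_y(μ·P); that is, the 1-form μ·ω is closed, so μ is an integrating factor of ω = P dx + Q dy. -/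
open MvPolynomial

lemma darboux_pow_aux (P Q : MvPolynomial (Fin 2) ℂ)
    (Ci Ki : MvPolynomial (Fin 2) ℂ)
    (hi : pderiv 0 Ci * Q - pderiv 1 Ci * P = Ci * Ki) (k : ℕ) :
    pderiv 0 (Ci ^ k) * Q - pderiv 1 (Ci ^ k) * P = Ci ^ k * ((k : MvPolynomial (Fin 2) ℂ) * Ki) := by
  cases k with
  | zero => simp
  | succ m =>
    rw [Derivation.leibniz_pow, Derivation.leibniz_pow]
    simp only [smul_smul, Nat.succ_sub_one, smul_eq_mul]
    have : Ci ^ (m + 1) = Ci ^ m * Ci := by ring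
    rw [this]
    push_cast
    linear_combination ((m : MvPolynomial (Fin 2) ℂ) + 1) * Ci ^ m * hi

lemma darboux_prod_aux (P Q : MvPolynomial (Fin 2) ℂ) (r : ℕ)
    (C K : Fin r → MvPolynomial (Fin 2) ℂ)
    (h : ∀ i, pderiv 0 (C i) * Q - pderiv 1 (C i) * P = C i * K i)
    (n : Fin r → ℕ) (s : Finset (Fin r)) :
    pderiv 0 (∏ i ∈ s, C i ^ n i) * Q - pderiv 1 (∏ i ∈ s, C i ^ n i) * P
      = (∏ i ∈ s, C i ^ n i) * ∑ i ∈ s, (n i : MvPolynomial (Fin 2) ℂ) * K i := by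
  induction s using Finset.induction with
  | empty => simp
  | insert a s ha ih =>
    rw [Finset.prod_insert ha, Finset.sum_insert ha]
    rw [Derivation.leibniz, Derivation.leibniz]
    simp only [smul_eq_mul]
    have h1 := darboux_pow_aux P Q (C a) (K a) (h a) (n a)
    linear_combination (C a ^ n a) * ih + (∏ i ∈ s, C i ^ n i) * h1

/-- Darboux's theorem, integrating-factor part, for natural exponents: if the
natural-number combination of the cofactors equals `-(∂ₓQ - ∂_yP)`, then
`μ = ∏ Cᵢ^{nᵢ}` is an integrating factor, i.e. the form `μ·ω` is closed. -/
theorem darboux_integrating_factor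
    (P Q : MvPolynomial (Fin 2) ℂ) (r : ℕ)
    (C K : Fin r → MvPolynomial (Fin 2) ℂ)
    (h : ∀ i, pderiv 0 (C i) * Q - pderiv 1 (C i) * P = C i * K i)
    (n : Fin r → ℕ)
    (hrel : ∑ i, (n i : MvPolynomial (Fin 2) ℂ) * K i
      = -(pderiv 0 Q - pderiv 1 P)) :
    pderiv 0 ((∏ i, C i ^ n i) * Q) = pderiv 1 ((∏ i, C i ^ n i) * P) := by
  have key := darboux_prod_aux P Q r C K h n Finset.univ
  rw [hrel] at key
  rw [Derivation.leibniz, Derivation.leibniz]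
  simp only [smul_eq_mul]
  linear_combination key
end

section
/- (Cofactor relation at infinity.) Let s ≥ 1 and e ≥ 1 be natural numbers, and let P, Q, C, K ∈ ℂ[x,y] satisfy ∂ₓC·Q − ∂_yC·P = C·K. Suppose P', Q', C', K' ∈ ℂ[y,z] satisfy ι(P') = z^s·φ(P), ι(Q') = z^s·φ(Q), ι(C') = z^e·φ(C), and ι(K') = z^{s−1}·φ(K) in ℂ(y,z). Then in ℂ[y,z]: −∂_yC'·(P' + y·Q') − z·∂_zC'·Q' = C'·(K' − e·Q'). (In the notation of the paper, this says the transformed curve C' is an integral curve of the transformed form ω' with cofactor K_{C'} satisfying (K_C)' = K_{C'} − (deg C)·K_z.) -/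
set_option synthInstance.maxHeartbeats 1000000
set_option maxHeartbeats 2000000

open MvPolynomial

/-- `S = ℂ[y,z]` with `y = X 0`, `z = X 1`. -/
noncomputable abbrev Spoly : Type := MvPolynomial (Fin 2) ℂ

/-- The canonical embedding `ι : ℂ[y,z] → ℂ(y,z)`. -/
noncomputable def ι : Spoly →+* FractionRing Spoly := algebraMap Spoly (FractionRing Spoly)

/-- The map `φ : ℂ[x,y] → ℂ(y,z)` determined by `x ↦ z⁻¹`, `y ↦ y·z⁻¹`. -/
noncomputable def φ : MvPolynomial (Fin 2) ℂ →ₐ[ℂ] FractionRing Spoly :=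
  aeval ![(ι (X 1))⁻¹, ι (X 0) * (ι (X 1))⁻¹]

namespace CofAux

noncomputable abbrev KK : Type := FractionRing Spoly

lemma hι : Function.Injective ι := IsFractionRing.injective Spoly KK

lemma exists_rep (x : KK) : ∃ a b : Spoly, ι b ≠ 0 ∧ x * ι b = ι a := by
  obtain ⟨⟨a, b⟩, hab⟩ := IsLocalization.surj (nonZeroDivisors Spoly) x
  exact ⟨a, b, IsFractionRing.to_map_ne_zero_of_mem_nonZeroDivisors b.2, hab⟩

noncomputable def Dfun (i : Fin 2) (x : KK) : KK :=
  (ι (pderiv i (IsLocalization.sec (nonZeroDivisors Spoly) x).1)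
    - x * ι (pderiv i ((IsLocalization.sec (nonZeroDivisors Spoly) x).2 : Spoly)))
    / ι ((IsLocalization.sec (nonZeroDivisors Spoly) x).2 : Spoly)

lemma Dfun_eq (i : Fin 2) (x : KK) (a b : Spoly) (hb : ι b ≠ 0)
    (hx : x * ι b = ι a) :
    Dfun i x = (ι (pderiv i a) - x * ι (pderiv i b)) / ι b := by
  set n := (IsLocalization.sec (nonZeroDivisors Spoly) x).1 with hn
  set m := ((IsLocalization.sec (nonZeroDivisors Spoly) x).2 : Spoly) with hm
  have hmne : ι m ≠ 0 :=
    IsFractionRing.to_map_ne_zero_of_mem_nonZeroDivisors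
      (IsLocalization.sec (nonZeroDivisors Spoly) x).2.2
  have hxm : x * ι m = ι n := IsLocalization.sec_spec (nonZeroDivisors Spoly) x
  have key : a * m = n * b := by
    apply hι
    rw [map_mul, map_mul, ← hx, ← hxm]; ring
  have key2 : ι (pderiv i a) * ι m + ι a * ι (pderiv i m)
      = ι (pderiv i n) * ι b + ι n * ι (pderiv i b) := by
    have h3 := congrArg (fun p => ι (pderiv i p)) key
    simp only [pderiv_mul, map_add, map_mul] at h3
    linear_combination h3
  rw [← hx, ← hxm] at key2
  unfold Dfun
  rw [← hn, ← hm, div_eq_div_iff hmne hb]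
  linear_combination -key2

lemma Dfun_ι (i : Fin 2) (a : Spoly) : Dfun i (ι a) = ι (pderiv i a) := by
  rw [Dfun_eq i (ι a) a 1 (by simp) (by simp)]
  simp

lemma Dfun_add (i : Fin 2) (x y : KK) : Dfun i (x + y) = Dfun i x + Dfun i y := by
  obtain ⟨a, b, hb, hx⟩ := exists_rep x
  obtain ⟨c, d, hd, hy⟩ := exists_rep y
  have hxy : (x + y) * ι (b * d) = ι (a * d + c * b) := by
    rw [map_mul, map_add, map_mul, map_mul]
    linear_combination (ι d) * hx + (ι b) * hy
  have hbd : ι (b * d) ≠ 0 := by rw [map_mul]; exact mul_ne_zero hb hd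
  have hx' : x = ι a / ι b := by rw [eq_div_iff hb]; exact hx
  have hy' : y = ι c / ι d := by rw [eq_div_iff hd]; exact hy
  rw [Dfun_eq i x a b hb hx, Dfun_eq i y c d hd hy,
    Dfun_eq i (x + y) _ (b * d) hbd hxy, hx', hy']
  simp only [pderiv_mul, map_add, map_mul]
  field_simp
  ring

lemma Dfun_mul (i : Fin 2) (x y : KK) : Dfun i (x * y) = x * Dfun i y + y * Dfun i x := by
  obtain ⟨a, b, hb, hx⟩ := exists_rep x
  obtain ⟨c, d, hd, hy⟩ := exists_rep y
  have hxy : (x * y) * ι (b * d) = ι (a * c) := by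
    rw [map_mul, map_mul]
    linear_combination (y * ι d) * hx + (ι a) * hy
  have hbd : ι (b * d) ≠ 0 := by rw [map_mul]; exact mul_ne_zero hb hd
  have hx' : x = ι a / ι b := by rw [eq_div_iff hb]; exact hx
  have hy' : y = ι c / ι d := by rw [eq_div_iff hd]; exact hy
  rw [Dfun_eq i x a b hb hx, Dfun_eq i y c d hd hy,
    Dfun_eq i (x * y) _ (b * d) hbd hxy, hx', hy']
  simp only [pderiv_mul, map_add, map_mul]
  field_simp
  ring

lemma Dfun_algebraMap (i : Fin 2) (r : ℂ) : Dfun i (algebraMap ℂ KK r) = 0 := by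
  have h1 : algebraMap ℂ KK r = ι (MvPolynomial.C r) := by
    rw [IsScalarTower.algebraMap_apply ℂ Spoly KK]
    rfl
  rw [h1, Dfun_ι, pderiv_C, map_zero]

noncomputable def Dder (i : Fin 2) : Derivation ℂ KK KK :=
  Derivation.mk'
    { toFun := Dfun i
      map_add' := Dfun_add i
      map_smul' := by
        intro r x
        simp only [RingHom.id_apply]
        rw [Algebra.smul_def r x, Algebra.smul_def r (Dfun i x), Dfun_mul, Dfun_algebraMap,
          mul_zero, add_zero]
    }
    (by
      intro a b
      simp only [LinearMap.coe_mk, AddHom.coe_mk, smul_eq_mul]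
      rw [Dfun_mul])

lemma Dder_ι (i : Fin 2) (a : Spoly) : Dder i (ι a) = ι (pderiv i a) := Dfun_ι i a

lemma Dchain (D : Derivation ℂ KK KK) (v : Fin 2 → KK) (p : MvPolynomial (Fin 2) ℂ) :
    D (aeval v p) = aeval v (pderiv 0 p) * D (v 0) + aeval v (pderiv 1 p) * D (v 1) := by
  induction p using MvPolynomial.induction_on with
  | C r => simp [Derivation.map_algebraMap]
  | add p q hp hq => simp only [map_add, hp, hq]; ring
  | mul_X p i hp =>
    rw [map_mul, aeval_X, D.leibniz, smul_eq_mul, smul_eq_mul, hp]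
    fin_cases i <;>
      simp [pderiv_mul, pderiv_X, Pi.single_apply] <;> ring

end CofAux

open CofAux

/-- Cofactor relation at infinity: the transformed curve `C'` is an integral
curve of the transformed form `ω' = (z·Q') dy - (P' + y·Q') dz` with cofactor
`K' - e·Q'`; in the paper's notation `(K_C)' = K_{C'} - (deg C)·K_z`. -/
theorem cofactor_relation_at_infinity
    (s e : ℕ) (hs : 1 ≤ s) (he : 1 ≤ e)
    (P Q C K : MvPolynomial (Fin 2) ℂ)
    (h : pderiv 0 C * Q - pderiv 1 C * P = C * K)
    (P' Q' C' K' : Spoly)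
    (hP' : ι P' = ι (X 1) ^ s * φ P)
    (hQ' : ι Q' = ι (X 1) ^ s * φ Q)
    (hC' : ι C' = ι (X 1) ^ e * φ C)
    (hK' : ι K' = ι (X 1) ^ (s - 1) * φ K) :
    -(pderiv 0 C') * (P' + X 0 * Q') - X 1 * pderiv 1 C' * Q'
      = C' * (K' - (e : Spoly) * Q') := by
  have hz : ι (X 1 : Spoly) ≠ 0 := by
    intro h0
    exact MvPolynomial.X_ne_zero 1 (hι (by rw [h0, map_zero]))
  have hφh : φ (pderiv 0 C) * φ Q - φ (pderiv 1 C) * φ P = φ C * φ K := by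
    have h3 := congrArg φ h
    simpa only [map_sub, map_mul] using h3
  have hDz1 : Dder 0 (ι (X 1 : Spoly)) = 0 := by
    rw [Dder_ι, pderiv_X_of_ne (by decide), map_zero]
  have hDz2 : Dder 1 (ι (X 1 : Spoly)) = 1 := by
    rw [Dder_ι, pderiv_X_self, map_one]
  have hDy1 : Dder 0 (ι (X 0 : Spoly)) = 1 := by
    rw [Dder_ι, pderiv_X_self, map_one]
  have hDy2 : Dder 1 (ι (X 0 : Spoly)) = 0 := by
    rw [Dder_ι, pderiv_X_of_ne (by decide), map_zero]
  have hD0v0 : Dder 0 ((ι (X 1 : Spoly))⁻¹) = 0 := by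
    rw [Derivation.leibniz_inv, hDz1, smul_zero]
  have hD1v0 : Dder 1 ((ι (X 1 : Spoly))⁻¹) = -((ι (X 1 : Spoly))⁻¹ ^ 2) := by
    rw [Derivation.leibniz_inv, hDz2]
    simp
  have hchain0 : Dder 0 (φ C) = φ (pderiv 1 C) * (ι (X 1 : Spoly))⁻¹ := by
    simp only [φ]
    have h4 := Dchain (Dder 0) ![(ι (X 1))⁻¹, ι (X 0) * (ι (X 1))⁻¹] C
    simp only [Matrix.cons_val_zero, Matrix.cons_val_one, Matrix.head_cons] at h4
    rw [Derivation.leibniz, hD0v0, hDy1, smul_zero, smul_eq_mul, mul_one, zero_add] at h4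
    rw [h4]
    ring
  have hchain1 : Dder 1 (φ C) =
      -(φ (pderiv 0 C) + ι (X 0 : Spoly) * φ (pderiv 1 C)) * ((ι (X 1 : Spoly))⁻¹) ^ 2 := by
    simp only [φ]
    have h4 := Dchain (Dder 1) ![(ι (X 1))⁻¹, ι (X 0) * (ι (X 1))⁻¹] C
    simp only [Matrix.cons_val_zero, Matrix.cons_val_one, Matrix.head_cons] at h4
    rw [Derivation.leibniz, hD1v0, hDy2, smul_zero, add_zero, smul_eq_mul] at h4
    rw [h4]
    ring
  have hze : ι (X 1 : Spoly) ^ (e - 1) * ι (X 1) = ι (X 1) ^ e := by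
    rw [← pow_succ, Nat.sub_add_cancel he]
  have hzs : ι (X 1 : Spoly) ^ (s - 1) * ι (X 1) = ι (X 1) ^ s := by
    rw [← pow_succ, Nat.sub_add_cancel hs]
  have hze' : ι (X 1 : Spoly) ^ (e - 1) = ι (X 1) ^ e * (ι (X 1))⁻¹ := by
    rw [eq_mul_inv_iff_mul_eq₀ hz]; exact hze
  have hDyC' : ι (pderiv 0 C') * ι (X 1) = ι (X 1) ^ e * φ (pderiv 1 C) := by
    have h1 := congrArg (Dder 0) hC'
    rw [Dder_ι, Derivation.leibniz, Derivation.leibniz_pow, hDz1, hchain0] at h1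
    simp only [mul_zero, smul_zero, add_zero, smul_eq_mul] at h1
    rw [h1]
    field_simp
  have hDzC' : ι (pderiv 1 C') * ι (X 1) ^ 2 =
      (e : KK) * ι (X 1) ^ e * ι (X 1) * φ C
        - ι (X 1) ^ e * (φ (pderiv 0 C) + ι (X 0) * φ (pderiv 1 C)) := by
    have h1 := congrArg (Dder 1) hC'
    rw [Dder_ι, Derivation.leibniz, Derivation.leibniz_pow, hDz2, hchain1, hze'] at h1
    simp only [smul_eq_mul, nsmul_eq_mul, mul_one] at h1
    rw [h1]
    field_simp
    ring
  have hK2 : ι K' * ι (X 1) = ι (X 1) ^ s * φ K := by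
    rw [hK']
    linear_combination (φ K) * hzs
  apply hι
  apply mul_right_cancel₀ (pow_ne_zero 2 hz)
  simp only [map_sub, map_mul, map_add, map_neg, map_natCast]
  rw [hP', hQ', hC']
  linear_combination (-(ι (X 1) ^ (s+1) * (φ P + ι (X 0) * φ Q))) * hDyC'
    + (-(ι (X 1) ^ (s+1) * φ Q)) * hDzC'
    + (-(ι (X 1) ^ (e+1) * φ C)) * hK2
    + (ι (X 1) ^ (e+s+1)) * hφh
end

section
/- (Relation between the exterior derivatives at infinity.) Let s ≥ 1 be a natural number and let P, Q ∈ ℂ[x,y]. Set W = ∂ₓQ − ∂_yP ∈ ℂ[x,y]. Suppose P', Q', W' ∈ ℂ[y,z] satisfy ι(P') = z^s·φ(P), ι(Q') = z^s·φ(Q), and ι(W') = z^{s−1}·φ(W) in ℂ(y,z). Then in ℂ[y,z]: ∂_y(−(P' + y·Q')) − ∂_z(z·Q') = W' − (s+2)·Q'. (In the notation of the paper, this says (dω)' = d(ω') − (deg ω + 2)·K_z.) -/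
set_option maxHeartbeats 1000000
set_option synthInstance.maxHeartbeats 200000


open MvPolynomial

lemma ι_inj : Function.Injective ι := IsFractionRing.injective Spoly (FractionRing Spoly)

lemma ι_ne_zero {a : Spoly} (h : a ≠ 0) : ι a ≠ 0 := by
  intro h0
  exact h (ι_inj (by simpa using h0))

/-- Extension of a derivation on `Spoly` to the fraction field, as a raw function. -/
noncomputable def Dext (d : Derivation ℂ Spoly Spoly) (x : FractionRing Spoly) :
    FractionRing Spoly :=
  (ι (d (IsLocalization.sec (nonZeroDivisors Spoly) x).1)
      * ι ((IsLocalization.sec (nonZeroDivisors Spoly) x).2 : Spoly)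
    - ι (IsLocalization.sec (nonZeroDivisors Spoly) x).1
      * ι (d ((IsLocalization.sec (nonZeroDivisors Spoly) x).2 : Spoly)))
    / (ι ((IsLocalization.sec (nonZeroDivisors Spoly) x).2 : Spoly)) ^ 2

lemma Dext_spec (d : Derivation ℂ Spoly Spoly) (a : Spoly) {b : Spoly} (hb : b ≠ 0) :
    Dext d (ι a / ι b) = (ι (d a) * ι b - ι a * ι (d b)) / (ι b) ^ 2 := by
  set x : FractionRing Spoly := ι a / ι b with hx
  set c : Spoly := (IsLocalization.sec (nonZeroDivisors Spoly) x).1 with hc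
  set e : Spoly := ((IsLocalization.sec (nonZeroDivisors Spoly) x).2 : Spoly) with he
  have he0 : e ≠ 0 :=
    nonZeroDivisors.ne_zero (IsLocalization.sec (nonZeroDivisors Spoly) x).2.2
  have hspec : x * ι e = ι c := IsLocalization.sec_spec (nonZeroDivisors Spoly) x
  have hιb : ι b ≠ 0 := ι_ne_zero hb
  have hιe : ι e ≠ 0 := ι_ne_zero he0
  have h2 : ι a * ι e = ι c * ι b := by
    rw [hx, div_mul_eq_mul_div, div_eq_iff hιb] at hspec
    exact hspec
  have hrel : a * e = c * b := by
    apply ι_inj; rw [map_mul, map_mul]; exact h2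
  have hrel2 : d a * e + a * d e = d c * b + c * d b := by
    have := congrArg d hrel
    simpa [Derivation.leibniz, smul_eq_mul, mul_comm, add_comm] using this
  have key : (d c * e - c * d e) * b ^ 2 = (d a * b - a * d b) * e ^ 2 := by
    linear_combination (b * e) * hrel2.symm + (d e * b + d b * e) * hrel
  have keyK := congrArg ι key
  simp only [map_mul, map_sub, map_add, map_pow] at keyK
  show (ι (d c) * ι e - ι c * ι (d e)) / (ι e) ^ 2
      = (ι (d a) * ι b - ι a * ι (d b)) / (ι b) ^ 2
  rw [div_eq_div_iff (pow_ne_zero 2 hιe) (pow_ne_zero 2 hιb)]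
  linear_combination keyK

lemma exists_rep (x : FractionRing Spoly) : ∃ a b : Spoly, b ≠ 0 ∧ x = ι a / ι b := by
  obtain ⟨a, b, hb, h⟩ := IsFractionRing.div_surjective (A := Spoly) x
  exact ⟨a, b, nonZeroDivisors.ne_zero hb, h.symm⟩

lemma Dext_ι (d : Derivation ℂ Spoly Spoly) (a : Spoly) : Dext d (ι a) = ι (d a) := by
  have h := Dext_spec d a (one_ne_zero (α := Spoly))
  simpa using h

lemma Dext_mul (d : Derivation ℂ Spoly Spoly) (x y : FractionRing Spoly) :
    Dext d (x * y) = Dext d x * y + x * Dext d y := by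
  obtain ⟨a, b, hb, rfl⟩ := exists_rep x
  obtain ⟨c, e, he, rfl⟩ := exists_rep y
  have hιb : ι b ≠ 0 := ι_ne_zero hb
  have hιe : ι e ≠ 0 := ι_ne_zero he
  rw [div_mul_div_comm, ← map_mul, ← map_mul, Dext_spec d _ (mul_ne_zero hb he),
    Dext_spec d a hb, Dext_spec d c he]
  rw [Derivation.leibniz, Derivation.leibniz, smul_eq_mul, smul_eq_mul]
  field_simp
  simp only [map_mul, map_add, map_sub, smul_eq_mul]
  ring

lemma Dext_add (d : Derivation ℂ Spoly Spoly) (x y : FractionRing Spoly) :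
    Dext d (x + y) = Dext d x + Dext d y := by
  obtain ⟨a, b, hb, rfl⟩ := exists_rep x
  obtain ⟨c, e, he, rfl⟩ := exists_rep y
  have hιb : ι b ≠ 0 := ι_ne_zero hb
  have hιe : ι e ≠ 0 := ι_ne_zero he
  rw [div_add_div _ _ hιb hιe, ← map_mul, ← map_mul, ← map_mul, ← map_add,
    Dext_spec d _ (mul_ne_zero hb he), Dext_spec d a hb, Dext_spec d c he]
  rw [map_add, Derivation.leibniz, Derivation.leibniz, Derivation.leibniz,
    smul_eq_mul, smul_eq_mul, smul_eq_mul]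
  field_simp
  simp only [map_mul, map_add, map_sub, smul_eq_mul]
  ring

lemma Dext_C (d : Derivation ℂ Spoly Spoly) (r : ℂ) :
    Dext d (algebraMap ℂ (FractionRing Spoly) r) = 0 := by
  have h : algebraMap ℂ (FractionRing Spoly) r = ι (C r) := by
    rw [IsScalarTower.algebraMap_apply ℂ Spoly (FractionRing Spoly)]
    rfl
  rw [h, Dext_ι, MvPolynomial.derivation_C, map_zero]

lemma Dext_chain (d : Derivation ℂ Spoly Spoly) (P : MvPolynomial (Fin 2) ℂ) :
    Dext d (φ P) = φ (pderiv 0 P) * Dext d ((ι (X 1))⁻¹)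
      + φ (pderiv 1 P) * Dext d (ι (X 0) * (ι (X 1))⁻¹) := by
  induction P using MvPolynomial.induction_on with
  | C r =>
    rw [show φ (C r) = algebraMap ℂ (FractionRing Spoly) r from aeval_C _ r, Dext_C]
    simp
  | add p q hp hq =>
    rw [map_add, Dext_add, hp, hq, map_add, map_add, map_add, map_add]
    ring
  | mul_X p i hp =>
    have h0 : φ (X 0) = (ι (X 1))⁻¹ := by simp [φ]
    have h1 : φ (X 1) = ι (X 0) * (ι (X 1))⁻¹ := by simp [φ]
    have hi : i = 0 ∨ i = 1 := by omega
    rcases hi with rfl | rfl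
    · rw [map_mul, Dext_mul, hp, h0]
      simp only [pderiv_mul, pderiv_X_self, pderiv_X_of_ne (by decide : (0 : Fin 2) ≠ 1),
        map_add, map_mul, map_zero, map_one, mul_zero, mul_one, h0, h1]
      ring
    · rw [map_mul, Dext_mul, hp, h1]
      simp only [pderiv_mul, pderiv_X_self, pderiv_X_of_ne (by decide : (1 : Fin 2) ≠ 0),
        map_add, map_mul, map_zero, map_one, mul_zero, mul_one, h0, h1]
      ring

lemma deriv_transfer (n : ℕ) (R : MvPolynomial (Fin 2) ℂ) (p : Spoly)
    (h : ι p = ι (X 1) ^ n * φ R) (d : Derivation ℂ Spoly Spoly) :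
    ι (d p) = ι (d ((X 1 : Spoly) ^ n)) * φ R
      + ι (X 1) ^ n * (φ (pderiv 0 R) * Dext d ((ι (X 1))⁻¹)
          + φ (pderiv 1 R) * Dext d (ι (X 0) * (ι (X 1))⁻¹)) := by
  rw [← Dext_ι d p, h, show ι (X 1) ^ n = ι ((X 1 : Spoly) ^ n) from (map_pow _ _ _).symm,
    Dext_mul, Dext_ι, Dext_chain, map_pow ι (X 1) n]

lemma hz_ne : ι (X 1) ≠ 0 := ι_ne_zero (X_ne_zero 1)

lemma Dy_v0 : Dext (pderiv 0) ((ι (X 1))⁻¹) = 0 := by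
  rw [show (ι (X 1))⁻¹ = ι 1 / ι (X 1) by rw [map_one, one_div],
    Dext_spec _ _ (X_ne_zero 1)]
  simp [pderiv_X_of_ne (by decide : (1 : Fin 2) ≠ 0)]

lemma Dy_v1 : Dext (pderiv 0) (ι (X 0) * (ι (X 1))⁻¹) = (ι (X 1))⁻¹ := by
  rw [← div_eq_mul_inv, Dext_spec _ _ (X_ne_zero 1)]
  rw [pderiv_X_self, pderiv_X_of_ne (by decide : (1 : Fin 2) ≠ 0)]
  rw [map_one, map_zero]
  rw [sq]
  field_simp
  rw [mul_zero, sub_zero, one_div, sq, div_mul_cancel_left₀ hz_ne]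

lemma Dz_v0 : Dext (pderiv 1) ((ι (X 1))⁻¹) = -((ι (X 1))⁻¹ * (ι (X 1))⁻¹) := by
  rw [show (ι (X 1))⁻¹ = ι 1 / ι (X 1) by rw [map_one, one_div],
    Dext_spec _ _ (X_ne_zero 1)]
  rw [pderiv_X_self, Derivation.map_one_eq_zero]
  simp only [map_zero, map_one, zero_mul, one_mul, zero_sub, sq]
  field_simp

lemma Dz_v1 : Dext (pderiv 1) (ι (X 0) * (ι (X 1))⁻¹)
    = -(ι (X 0) * ((ι (X 1))⁻¹ * (ι (X 1))⁻¹)) := by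
  rw [← div_eq_mul_inv, Dext_spec _ _ (X_ne_zero 1)]
  rw [pderiv_X_self, pderiv_X_of_ne (by decide : (0 : Fin 2) ≠ 1), map_one, map_zero, sq]
  rw [zero_mul, mul_one, zero_sub, div_eq_mul_inv, mul_inv]
  ring

/-- Relation between the exterior derivatives at infinity: with
`ω' = (z·Q') dy - (P' + y·Q') dz`, the `dy∧dz`-coefficient of `d(ω')` satisfies
`(dω)' = d(ω') - (deg ω + 2)·K_z`, i.e.
`∂_y(-(P' + y·Q')) - ∂_z(z·Q') = W' - (s+2)·Q'`. -/
theorem exterior_derivative_at_infinity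
    (s : ℕ) (hs : 1 ≤ s)
    (P Q : MvPolynomial (Fin 2) ℂ)
    (P' Q' W' : Spoly)
    (hP' : ι P' = ι (X 1) ^ s * φ P)
    (hQ' : ι Q' = ι (X 1) ^ s * φ Q)
    (hW' : ι W' = ι (X 1) ^ (s - 1) * φ (pderiv 0 Q - pderiv 1 P)) :
    pderiv 0 (-(P' + X 0 * Q')) - pderiv 1 (X 1 * Q')
      = W' - ((s : Spoly) + 2) * Q' := by
  have hz : ι (X 1) ≠ 0 := hz_ne
  have hys : pderiv 0 ((X 1 : Spoly) ^ s) = 0 := by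
    rw [pderiv_pow, pderiv_X_of_ne (by decide : (1 : Fin 2) ≠ 0)]
    ring
  have hzs : pderiv 1 ((X 1 : Spoly) ^ s) = (s : Spoly) * X 1 ^ (s - 1) := by
    rw [pderiv_pow, pderiv_X_self]
    ring
  have EP := deriv_transfer s P P' hP' (pderiv 0)
  have EQy := deriv_transfer s Q Q' hQ' (pderiv 0)
  have EQz := deriv_transfer s Q Q' hQ' (pderiv 1)
  rw [hys, map_zero, Dy_v0, Dy_v1] at EP EQy
  rw [hzs, Dz_v0, Dz_v1] at EQz
  have hpow : ι (X 1) ^ s = ι (X 1) ^ (s - 1) * ι (X 1) := by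
    conv_lhs => rw [show s = (s - 1) + 1 from (Nat.succ_pred_eq_of_pos hs).symm]
    rw [pow_succ]
  apply ι_inj
  have expand : pderiv 0 (-(P' + X 0 * Q')) - pderiv 1 (X 1 * Q')
      = -(pderiv 0 P') - X 0 * pderiv 0 Q' - Q' - Q' - X 1 * pderiv 1 Q' := by
    simp only [map_neg, map_add, pderiv_mul, pderiv_X_self,
      pderiv_X_of_ne (by decide : (0 : Fin 2) ≠ 1),
      pderiv_X_of_ne (by decide : (1 : Fin 2) ≠ 0), one_mul, zero_mul, mul_zero]
    ring
  have EP' : ι (pderiv 0 P') = ι (X 1) ^ (s - 1) * φ (pderiv 1 P) := by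
    rw [EP, hpow]
    field_simp
    ring
  have EQy' : ι (pderiv 0 Q') = ι (X 1) ^ (s - 1) * φ (pderiv 1 Q) := by
    rw [EQy, hpow]
    field_simp
    ring
  have EQz' : ι (X 1) * ι (pderiv 1 Q') = (s : FractionRing Spoly) * (ι (X 1) ^ s * φ Q)
      - ι (X 1) ^ (s - 1) * (φ (pderiv 0 Q) + ι (X 0) * φ (pderiv 1 Q)) := by
    have hone : ι (X 1) ^ 2 * (ι (X 1))⁻¹ ^ 2 = 1 := by
      rw [inv_pow, mul_inv_cancel₀ (pow_ne_zero 2 hz)]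
    rw [EQz, map_mul, map_natCast, map_pow, hpow]
    field_simp
    ring
  rw [expand]
  rw [map_sub] at hW'
  simp only [map_sub, map_neg, map_add, map_mul, map_natCast, map_ofNat]
  rw [EP', EQy', EQz', hW', hQ', hpow]
  ring
end

section
/- (Main theorem: η-criterion for Darboux integrability, linear-algebra core.) Let s ≥ 1, r, k be natural numbers. Let K₁,…,K_r, W ∈ ℂ[X,Y,Z] be homogeneous polynomials of degree s−1, let a₁,…,a_k ∈ ℂ³, let d₁,…,d_r ∈ ℕ, and let c₁,…,c_k ∈ ℂ. Let M be the (k+1)×(r+2) complex matrix whose j-th row (for 1 ≤ j ≤ k) is (c_j, K₁(a_j) + d₁·c_j, …, K_r(a_j) + d_r·c_j, W(a_j) + (s+2)·c_j), and whose last row is (1, d₁, …, d_r, s+2). Assume: (1) rank M ≤ r+1; and (2) the only homogeneous polynomial of degree s−1 in ℂ[X,Y,Z] vanishing at all the points a₁,…,a_k is the zero polynomial. Then there exist scalars λ₁,…,λ_r, λ_{r+1} ∈ ℂ, not all zero, such that λ₁·K₁ + ⋯ + λ_r·K_r + λ_{r+1}·W = 0 in ℂ[X,Y,Z]. (The j-th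 rows are the invariants η'(ω,{C₁,…,C_r},P_j) at the η-geometric points, the last row is the projection center, and the conclusion is a nontrivial linear relation among the cofactors K_{Cᵢ} and dω, i.e., Darboux integrability of ω.) -/
open MvPolynomial

lemma sum_split_aux {n : ℕ} (f : Fin (n + 2) → ℂ) :
    ∑ i, f i = f 0 + (∑ i : Fin n, f i.succ.castSucc) + f (Fin.last (n + 1)) := by
  rw [Fin.sum_univ_succ, Fin.sum_univ_castSucc]
  simp [Fin.succ_last, add_assoc]

lemma fin_cases_aux {n : ℕ} (i : Fin (n + 2)) :
    i = 0 ∨ (∃ j : Fin n, i = j.succ.castSucc) ∨ i = Fin.last (n + 1) := by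
  induction i using Fin.cases with
  | zero => exact Or.inl rfl
  | succ j =>
    induction j using Fin.lastCases with
    | last => exact Or.inr (Or.inr (by simp [Fin.succ_last]))
    | cast t => exact Or.inr (Or.inl ⟨t, by rw [Fin.succ_castSucc]⟩)

/-- η-criterion for Darboux integrability (linear-algebra core): if the matrix
`M_{η'}` built from the invariants `η'` at the η-geometric points together with
the projection center has rank at most `r+1`, and no nonzero homogeneous
polynomial of degree `s-1` vanishes at all the points, then there is a
nontrivial linear relation `∑ λᵢ·Kᵢ + λ_{r+1}·W = 0` among the cofactors and
`dω`, i.e. `ω` is Darboux integrable. -/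
theorem eta_criterion_darboux_integrability
    (s r k : ℕ) (hs : 1 ≤ s)
    (Kc : Fin r → MvPolynomial (Fin 3) ℂ) (W : MvPolynomial (Fin 3) ℂ)
    (hKc : ∀ i, (Kc i).IsHomogeneous (s - 1))
    (hW : W.IsHomogeneous (s - 1))
    (a : Fin k → (Fin 3 → ℂ)) (d : Fin r → ℕ) (c : Fin k → ℂ)
    (M : Matrix (Fin (k + 1)) (Fin (r + 2)) ℂ)
    (hM0 : ∀ j : Fin k, M j.castSucc 0 = c j)
    (hMi : ∀ (j : Fin k) (i : Fin r),
      M j.castSucc i.succ.castSucc = eval (a j) (Kc i) + (d i : ℂ) * c j)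
    (hMW : ∀ j : Fin k,
      M j.castSucc (Fin.last (r + 1)) = eval (a j) W + ((s : ℂ) + 2) * c j)
    (hL0 : M (Fin.last k) 0 = 1)
    (hLi : ∀ i : Fin r, M (Fin.last k) i.succ.castSucc = (d i : ℂ))
    (hLW : M (Fin.last k) (Fin.last (r + 1)) = (s : ℂ) + 2)
    (hrank : M.rank ≤ r + 1)
    (hpoints : ∀ F : MvPolynomial (Fin 3) ℂ, F.IsHomogeneous (s - 1) →
      (∀ j : Fin k, eval (a j) F = 0) → F = 0) :
    ∃ (lam : Fin r → ℂ) (mu : ℂ), (lam ≠ 0 ∨ mu ≠ 0) ∧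
      (∑ i, lam i • Kc i) + mu • W = 0 := by
  -- nontrivial kernel
  have hker : LinearMap.ker M.mulVecLin ≠ ⊥ := by
    intro h
    have hrn := LinearMap.finrank_range_add_finrank_ker M.mulVecLin
    rw [h, finrank_bot] at hrn
    have hdom : Module.finrank ℂ (Fin (r + 2) → ℂ) = r + 2 := by simp
    rw [hdom] at hrn
    have : M.rank = r + 2 := by rw [Matrix.rank]; omega
    omega
  obtain ⟨v, hvmem, hvne⟩ := Submodule.exists_mem_ne_zero_of_ne_bot hker
  have hv : M.mulVec v = 0 := hvmem
  set lam : Fin r → ℂ := fun i => v i.succ.castSucc with hlam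
  set mu : ℂ := v (Fin.last (r + 1)) with hmu
  refine ⟨lam, mu, ?_, ?_⟩
  · by_contra hcon
    push_neg at hcon
    obtain ⟨hl0, hm0⟩ := hcon
    -- last row equation gives v 0 = 0
    have hlast : M.mulVec v (Fin.last k) = 0 := by rw [hv]; rfl
    have hlast' : ∑ i, M (Fin.last k) i * v i = 0 := hlast
    rw [sum_split_aux (fun i => M (Fin.last k) i * v i)] at hlast'
    simp only [hL0, hLi, hLW, one_mul] at hlast'
    have hz : ∀ i : Fin r, v i.succ.castSucc = 0 := fun i => congrFun hl0 i
    rw [← hmu, hm0] at hlast'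
    have hv0 : v 0 = 0 := by
      have : ∑ i : Fin r, (d i : ℂ) * v i.succ.castSucc = 0 := by
        apply Finset.sum_eq_zero; intro i _; rw [hz i, mul_zero]
      rw [this] at hlast'; simpa using hlast'
    apply hvne
    funext i
    rcases fin_cases_aux i with h | ⟨j, h⟩ | h
    · rw [h]; exact hv0
    · rw [h]; exact hz j
    · rw [h, ← hmu]; exact hm0
  · set F : MvPolynomial (Fin 3) ℂ := (∑ i, lam i • Kc i) + mu • W with hF
    apply hpoints
    · rw [hF]
      have : (∑ i, lam i • Kc i) + mu • W ∈ homogeneousSubmodule (Fin 3) ℂ (s - 1) := by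
        apply Submodule.add_mem
        · exact Submodule.sum_mem _ fun i _ =>
            Submodule.smul_mem _ _ ((mem_homogeneousSubmodule _ _).2 (hKc i))
        · exact Submodule.smul_mem _ _ ((mem_homogeneousSubmodule _ _).2 hW)
      exact (mem_homogeneousSubmodule _ _).1 this
    · intro j
      -- row j equation
      have hrow : ∑ i, M j.castSucc i * v i = 0 := congrFun hv j.castSucc
      rw [sum_split_aux (fun i => M j.castSucc i * v i)] at hrow
      simp only [hM0, hMi, hMW] at hrow
      have hlast' : ∑ i, M (Fin.last k) i * v i = 0 := congrFun hv (Fin.last k)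
      rw [sum_split_aux (fun i => M (Fin.last k) i * v i)] at hlast'
      simp only [hL0, hLi, hLW, one_mul] at hlast'
      have expand : ∑ i : Fin r, (eval (a j) (Kc i) + (d i : ℂ) * c j) * v i.succ.castSucc
          = (∑ i : Fin r, eval (a j) (Kc i) * v i.succ.castSucc)
            + c j * ∑ i : Fin r, (d i : ℂ) * v i.succ.castSucc := by
        rw [Finset.mul_sum, ← Finset.sum_add_distrib]
        apply Finset.sum_congr rfl; intro i _; ring
      rw [expand] at hrow
      have heval : eval (a j) F
          = (∑ i : Fin r, eval (a j) (Kc i) * v i.succ.castSucc)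
            + v (Fin.last (r + 1)) * eval (a j) W := by
        rw [hF]
        simp only [map_add, map_sum, smul_eval, hlam, hmu]
        congr 1
        apply Finset.sum_congr rfl; intro i _; ring
      rw [heval]
      linear_combination hrow - c j * hlast'
end

section
/- Let P, Q ∈ ℂ[x,y], let r ∈ ℕ, and for i = 1,…,r let Cᵢ, Kᵢ ∈ ℂ[x,y] satisfy ∂ₓCᵢ·Q − ∂_yCᵢ·P = Cᵢ·Kᵢ. Suppose there exist complex numbers α₁,…,α_r with ∑ᵢ αᵢ·Kᵢ = −(∂ₓQ − ∂_yP) in ℂ[x,y] (the Darboux condition for an integrating factor). If a ∈ ℂ² satisfies P(a) = 0, Q(a) = 0, and Cᵢ(a) ≠ 0 for all i (a zero of ω lying on none of the integral curves), then (∂ₓQ − ∂_yP)(a) = 0. -/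
open MvPolynomial

/-- If the Darboux condition `∑ αᵢ·Kᵢ = -dω` for an integrating factor holds,
then at any zero `a` of `ω` lying on none of the integral curves we have
`dω(a) = 0`. -/
theorem domega_vanishes_at_zero_off_curves
    (P Q : MvPolynomial (Fin 2) ℂ) (r : ℕ)
    (C K : Fin r → MvPolynomial (Fin 2) ℂ)
    (h : ∀ i, pderiv 0 (C i) * Q - pderiv 1 (C i) * P = C i * K i)
    (α : Fin r → ℂ)
    (hrel : ∑ i, α i • K i = -(pderiv 0 Q - pderiv 1 P))
    (a : Fin 2 → ℂ)
    (hP : eval a P = 0) (hQ : eval a Q = 0)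
    (hC : ∀ i, eval a (C i) ≠ 0) :
    eval a (pderiv 0 Q - pderiv 1 P) = 0 := by
  have hK : ∀ i, eval a (K i) = 0 := by
    intro i
    have := congrArg (eval a) (h i)
    simp [hP, hQ] at this
    rcases this with h1 | h1
    · exact absurd h1 (hC i)
    · exact h1
  have := congrArg (eval a) hrel
  simp [hK] at this
  simp only [eval_sub]
  linear_combination this
end

section
/- (Generation of the syzygy module of (C_x, C_y, C) for a binary form.) Let k be a field and let C ∈ k[x,y] be a nonzero homogeneous polynomial of degree d ≥ 1 such that (d : k) ≠ 0. Write C_x = ∂ₓC and C_y = ∂_yC, and suppose g, D_x, D_y ∈ k[x,y] satisfy C_x = g·D_x, C_y = g·D_y, g ≠ 0, and every common divisor of D_x and D_y is a unit. Then for all A, B, E ∈ k[x,y] with A·C_x + B·C_y + E·C = 0, there exist F, G ∈ k[x,y] such that A = x·F + D_y·G, B = y·F − D_x·G, and E = −(d : k)·F. (That is, the syzygy module of (C_x, C_y, C) over k[x,y] is generated by the Euler syzygy (x, y, −d) and the Koszul-type syzygy (D_y, −D_x, 0).) -/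
open MvPolynomial

private lemma euler_term {k : Type*} [CommSemiring k] (m : Fin 2 →₀ ℕ) (a : k) (i : Fin 2) :
    X i * pderiv i (monomial m a) = (m i) • monomial m a := by
  rw [pderiv_monomial, X, monomial_mul, one_mul]
  rcases Nat.eq_zero_or_pos (m i) with h | h
  · simp [h]
  · have : Finsupp.single i 1 + (m - Finsupp.single i 1) = m := by
      ext j
      by_cases hj : j = i
      · subst hj
        simp [Finsupp.single_apply]
        omega
      · simp [Finsupp.single_apply, hj, Ne.symm hj]
    rw [this, smul_monomial]
    congr 1
    rw [nsmul_eq_mul, mul_comm]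

private lemma euler_identity {k : Type*} [CommSemiring k]
    (C : MvPolynomial (Fin 2) k) (d : ℕ) (hhom : C.IsHomogeneous d) :
    X 0 * pderiv 0 C + X 1 * pderiv 1 C = d • C := by
  conv_lhs => rw [← C.support_sum_monomial_coeff]
  rw [map_sum, map_sum, Finset.mul_sum, Finset.mul_sum, ← Finset.sum_add_distrib]
  conv_rhs => rw [← C.support_sum_monomial_coeff, Finset.smul_sum]
  apply Finset.sum_congr rfl
  intro m hm
  rw [euler_term, euler_term, ← add_smul]
  congr 1
  have hdeg := hhom (mem_support_iff.mp hm)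
  simpa [Finsupp.weight_apply, Finsupp.sum_fintype, Fin.sum_univ_two] using hdeg

/-- Generation of the syzygy module of `(C_x, C_y, C)` for a binary form: the
syzygy module is generated by the Euler syzygy `(x, y, -d)` and the
Koszul-type syzygy `(D_y, -D_x, 0)` where `C_x = g·D_x`, `C_y = g·D_y` and
`g = gcd(C_x, C_y)`. -/
theorem syzygy_module_binary_form
    {k : Type*} [Field k]
    (C : MvPolynomial (Fin 2) k) (d : ℕ)
    (hC : C ≠ 0) (hhom : C.IsHomogeneous d) (hd : 1 ≤ d)
    (hdk : (d : k) ≠ 0)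
    (g Dx Dy : MvPolynomial (Fin 2) k)
    (hgx : pderiv 0 C = g * Dx) (hgy : pderiv 1 C = g * Dy)
    (hg : g ≠ 0)
    (hcop : ∀ h : MvPolynomial (Fin 2) k, h ∣ Dx → h ∣ Dy → IsUnit h)
    (A B E : MvPolynomial (Fin 2) k)
    (hsyz : A * pderiv 0 C + B * pderiv 1 C + E * C = 0) :
    ∃ F G : MvPolynomial (Fin 2) k,
      A = X 0 * F + Dy * G ∧
      B = X 1 * F - Dx * G ∧
      E = -((d : k) • F) := by
  have euler : X 0 * pderiv 0 C + X 1 * pderiv 1 C = (d : k) • C := by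
    rw [euler_identity C d hhom, Nat.cast_smul_eq_nsmul]
  set F : MvPolynomial (Fin 2) k := -((d : k)⁻¹ • E) with hF
  have hE : E = -((d : k) • F) := by
    rw [hF, smul_neg, neg_neg, smul_smul, mul_inv_cancel₀ hdk, one_smul]
  have keyg : g * ((A - X 0 * F) * Dx + (B - X 1 * F) * Dy) = 0 := by
    have hEC : E * C = -(F * ((d : k) • C)) := by
      rw [hE, neg_mul, smul_mul_assoc, mul_smul_comm]
    have : (A - X 0 * F) * (g * Dx) + (B - X 1 * F) * (g * Dy) = 0 := by
      rw [← hgx, ← hgy]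
      calc (A - X 0 * F) * pderiv 0 C + (B - X 1 * F) * pderiv 1 C
          = (A * pderiv 0 C + B * pderiv 1 C + E * C)
            - (F * (X 0 * pderiv 0 C + X 1 * pderiv 1 C) + E * C) := by ring
        _ = 0 := by rw [hsyz, euler, hEC]; ring
    rw [← this]; ring
  have key : (A - X 0 * F) * Dx + (B - X 1 * F) * Dy = 0 :=
    (mul_eq_zero.mp keyg).resolve_left hg
  rcases eq_or_ne Dy 0 with hDy | hDy
  · subst hDy
    have hDxu : IsUnit Dx := hcop Dx dvd_rfl (dvd_zero Dx)
    obtain ⟨v, hv⟩ := hDxu.exists_right_inv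
    have hA0 : A - X 0 * F = 0 := by
      have h0 : (A - X 0 * F) * Dx = 0 := by linear_combination key
      exact (mul_eq_zero.mp h0).resolve_right hDxu.ne_zero
    refine ⟨F, -(v * (B - X 1 * F)), by linear_combination hA0, ?_, hE⟩
    linear_combination (-(B - X 1 * F)) * hv
  · have hprime : IsRelPrime Dy Dx := fun h h1 h2 => hcop h h2 h1
    have hdvd : Dy ∣ (A - X 0 * F) := by
      apply hprime.dvd_of_dvd_mul_right (y := A - X 0 * F)
      exact ⟨-(B - X 1 * F), by linear_combination key⟩
    obtain ⟨G, hG⟩ := hdvd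
    refine ⟨F, G, by linear_combination hG, ?_, hE⟩
    have h0 : Dy * ((B - X 1 * F) + Dx * G) = 0 := by
      rw [hG] at key; linear_combination key
    have h2 := (mul_eq_zero.mp h0).resolve_left hDy
    linear_combination h2
end

section
/- (Structure of a differential form restricted to the line at infinity.) Let k be a field and let C ∈ k[x,y] be a nonzero homogeneous polynomial of degree d ≥ 1 with (d : k) ≠ 0. Let s ∈ ℕ and let P, Q ∈ k[x,y] be homogeneous of degree s, and K ∈ k[x,y], with ∂ₓC·Q − ∂_yC·P = C·K. Assume that every common divisor g of ∂ₓC and ∂_yC has total degree at most d − s − 2. Then there exists a homogeneous polynomial F ∈ k[x,y] of degree s − 1 such that Q = x·F, P = −y·F, and K = (d : k)·F. (Consequently the restriction of ω to the line at infinity vanishes exactly at the zeros of the binary form F, so ω has, counted with multiplicity, exactly deg ω − 1 = s − 1 zeros at infinity.) -/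
open MvPolynomial



namespace FormInf

variable {σ : Type*} {R : Type*}

lemma degree_add' (a b : σ →₀ ℕ) : (a + b).degree = a.degree + b.degree := by
  rw [Finsupp.degree_eq_weight_one]; exact map_add _ a b

lemma degree_single' (i : σ) : (Finsupp.single i 1).degree = 1 := by
  classical
  rw [Finsupp.degree_apply, Finsupp.support_single_ne_zero _ one_ne_zero, Finset.sum_singleton,
    Finsupp.single_eq_same]

section CS
variable [CommSemiring R]

lemma isHomogeneous_iff_degree {φ : MvPolynomial σ R} {n : ℕ} :
    φ.IsHomogeneous n ↔ ∀ d : σ →₀ ℕ, coeff d φ ≠ 0 → d.degree = n := by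
  constructor
  · intro h d hd
    have := h hd
    rwa [Finsupp.degree_eq_weight_one]
  · intro h d hd
    have := h d hd
    rwa [Finsupp.degree_eq_weight_one] at this

lemma degree_eq_sum (m : σ →₀ ℕ) : (m.sum fun _ e => e) = m.degree := rfl

lemma coeff_mul_extremal (p q : MvPolynomial σ R) (dp dq : ℕ)
    (h : ∀ v w : σ →₀ ℕ, coeff v p ≠ 0 → coeff w q ≠ 0 → v.degree + w.degree = dp + dq →
      v.degree = dp ∧ w.degree = dq)
    (u : σ →₀ ℕ) (hu : u.degree = dp + dq) :
    coeff u (p * q) =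
      coeff u (homogeneousComponent dp p * homogeneousComponent dq q) := by
  classical
  rw [coeff_mul, coeff_mul]
  refine Finset.sum_congr rfl ?_
  rintro ⟨v, w⟩ hvw
  have hvwu : v + w = u := Finset.HasAntidiagonal.mem_antidiagonal.mp hvw
  by_cases hv : coeff v p = 0
  · simp [coeff_homogeneousComponent, hv]
  by_cases hw : coeff w q = 0
  · simp [coeff_homogeneousComponent, hw]
  have hdeg : v.degree + w.degree = dp + dq := by rw [← degree_add', hvwu, hu]
  obtain ⟨h1, h2⟩ := h v w hv hw hdeg
  simp [coeff_homogeneousComponent, h1, h2]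

lemma homogeneousComponent_totalDegree_ne_zero (p : MvPolynomial σ R) (hp : p ≠ 0) :
    homogeneousComponent p.totalDegree p ≠ 0 := by
  classical
  obtain ⟨u, hu, hud⟩ := Finset.exists_mem_eq_sup p.support
    (Finset.nonempty_iff_ne_empty.mpr (mt support_eq_empty.mp hp)) (fun m : σ →₀ ℕ => m.sum fun _ e => e)
  have hcu : coeff u (homogeneousComponent p.totalDegree p) ≠ 0 := by
    rw [coeff_homogeneousComponent, if_pos]
    · exact mem_support_iff.mp hu
    · rw [← degree_eq_sum]
      exact hud.symm
  exact fun h0 => hcu (by rw [h0, coeff_zero])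

lemma homogeneousComponent_inf_ne_zero (p : MvPolynomial σ R) (H : p.support.Nonempty) :
    homogeneousComponent (p.support.inf' H Finsupp.degree) p ≠ 0 := by
  classical
  obtain ⟨u, hu, hud⟩ := Finset.exists_mem_eq_inf' H Finsupp.degree
  have hcu : coeff u (homogeneousComponent (p.support.inf' H Finsupp.degree) p) ≠ 0 := by
    rw [coeff_homogeneousComponent, if_pos hud.symm]
    exact mem_support_iff.mp hu
  exact fun h0 => hcu (by rw [h0, coeff_zero])

end CS

section Dom
variable [CommSemiring R] [NoZeroDivisors R]

lemma totalDegree_mul_eq' {p q : MvPolynomial σ R} (hp : p ≠ 0) (hq : q ≠ 0) :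
    (p * q).totalDegree = p.totalDegree + q.totalDegree := by
  classical
  refine le_antisymm (totalDegree_mul p q) ?_
  have hne := mul_ne_zero (homogeneousComponent_totalDegree_ne_zero p hp)
    (homogeneousComponent_totalDegree_ne_zero q hq)
  obtain ⟨u, hu⟩ := ne_zero_iff.mp hne
  have hhom : (homogeneousComponent p.totalDegree p *
      homogeneousComponent q.totalDegree q).IsHomogeneous (p.totalDegree + q.totalDegree) :=
    (homogeneousComponent_isHomogeneous _ _).mul (homogeneousComponent_isHomogeneous _ _)
  have hud : u.degree = p.totalDegree + q.totalDegree := isHomogeneous_iff_degree.mp hhom u hu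
  have key := coeff_mul_extremal p q p.totalDegree q.totalDegree ?_ u hud
  · have hcu : coeff u (p * q) ≠ 0 := by rw [key]; exact hu
    have := le_totalDegree (mem_support_iff.mpr hcu)
    rw [degree_eq_sum, hud] at this
    exact this
  · intro v w hv hw hsum
    have h1 : v.degree ≤ p.totalDegree := by
      have := le_totalDegree (mem_support_iff.mpr hv)
      rwa [degree_eq_sum] at this
    have h2 : w.degree ≤ q.totalDegree := by
      have := le_totalDegree (mem_support_iff.mpr hw)
      rwa [degree_eq_sum] at this
    omega

lemma isHomogeneous_of_mul_isHomogeneous {p q : MvPolynomial σ R}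
    (hp : p ≠ 0) (hq : q ≠ 0) {n : ℕ} (h : (p * q).IsHomogeneous n) :
    p.IsHomogeneous p.totalDegree ∧ q.IsHomogeneous q.totalDegree ∧
      p.totalDegree + q.totalDegree = n := by
  classical
  have hpq : p * q ≠ 0 := mul_ne_zero hp hq
  have hn : p.totalDegree + q.totalDegree = n := by
    rw [← totalDegree_mul_eq' hp hq]
    exact h.totalDegree hpq
  have Hp : p.support.Nonempty := Finset.nonempty_iff_ne_empty.mpr (mt support_eq_empty.mp hp)
  have Hq : q.support.Nonempty := Finset.nonempty_iff_ne_empty.mpr (mt support_eq_empty.mp hq)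
  set ep := p.support.inf' Hp Finsupp.degree with hep
  set eq' := q.support.inf' Hq Finsupp.degree with heq'
  have hLp := homogeneousComponent_inf_ne_zero p Hp
  have hLq := homogeneousComponent_inf_ne_zero q Hq
  obtain ⟨u, hu⟩ := ne_zero_iff.mp (mul_ne_zero hLp hLq)
  have hhom : (homogeneousComponent ep p * homogeneousComponent eq' q).IsHomogeneous (ep + eq') :=
    (homogeneousComponent_isHomogeneous _ _).mul (homogeneousComponent_isHomogeneous _ _)
  have hud : u.degree = ep + eq' := isHomogeneous_iff_degree.mp hhom u hu
  have hlow : ∀ v : σ →₀ ℕ, coeff v p ≠ 0 → ep ≤ v.degree := fun v hv =>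
    Finset.inf'_le _ (mem_support_iff.mpr hv)
  have hlow' : ∀ w : σ →₀ ℕ, coeff w q ≠ 0 → eq' ≤ w.degree := fun w hw =>
    Finset.inf'_le _ (mem_support_iff.mpr hw)
  have key := coeff_mul_extremal p q ep eq' ?_ u hud
  · have hcu : coeff u (p * q) ≠ 0 := by rw [key]; exact hu
    have hun : u.degree = n := isHomogeneous_iff_degree.mp h u hcu
    have hsum : ep + eq' = n := by rw [← hud, hun]
    have hple : ep ≤ p.totalDegree := by
      obtain ⟨v0, hv0⟩ := Hp
      refine le_trans (Finset.inf'_le _ hv0) ?_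
      have := le_totalDegree hv0
      rwa [degree_eq_sum] at this
    have hqle : eq' ≤ q.totalDegree := by
      obtain ⟨w0, hw0⟩ := Hq
      refine le_trans (Finset.inf'_le _ hw0) ?_
      have := le_totalDegree hw0
      rwa [degree_eq_sum] at this
    have hepq : ep = p.totalDegree := by omega
    have heqq : eq' = q.totalDegree := by omega
    refine ⟨?_, ?_, hn⟩
    · rw [isHomogeneous_iff_degree]
      intro v hv
      have h1 := hlow v hv
      have h2 : v.degree ≤ p.totalDegree := by
        have := le_totalDegree (mem_support_iff.mpr hv)
        rwa [degree_eq_sum] at this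
      omega
    · rw [isHomogeneous_iff_degree]
      intro w hw
      have h1 := hlow' w hw
      have h2 : w.degree ≤ q.totalDegree := by
        have := le_totalDegree (mem_support_iff.mpr hw)
        rwa [degree_eq_sum] at this
      omega
  · intro v w hv hw hsum
    have h1 := hlow v hv
    have h2 := hlow' w hw
    omega

end Dom

end FormInf

namespace FormInf
variable {σ : Type*} {R : Type*}

lemma degree_add'' (a b : σ →₀ ℕ) : (a + b).degree = a.degree + b.degree := by
  rw [Finsupp.degree_eq_weight_one]; exact map_add _ a b

lemma pderiv_isHomogeneous [CommSemiring R] {φ : MvPolynomial σ R} {n : ℕ}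
    (h : φ.IsHomogeneous n) (i : σ) : (pderiv i φ).IsHomogeneous (n - 1) := by
  classical
  rw [show pderiv i φ = ∑ u ∈ φ.support, pderiv i (monomial u (coeff u φ)) by
    rw [← map_sum, ← φ.as_sum]]
  apply IsHomogeneous.sum
  intro u hu
  rw [pderiv_monomial]
  by_cases hui : u i = 0
  · rw [hui]
    simp only [Nat.cast_zero, mul_zero, map_zero]
    exact isHomogeneous_zero _ _ _
  · apply isHomogeneous_monomial
    have hdu : u.degree = n := by
      have := h (mem_support_iff.mp hu)
      rwa [Finsupp.degree_eq_weight_one]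
    have hle : Finsupp.single i 1 ≤ u :=
      Finsupp.single_le_iff.mpr (Nat.one_le_iff_ne_zero.mpr hui)
    have h2 := degree_add'' (u - Finsupp.single i 1) (Finsupp.single i 1)
    rw [tsub_add_cancel_of_le hle] at h2
    have h3 : (Finsupp.single i 1).degree = 1 := by
      rw [Finsupp.degree_apply, Finsupp.support_single_ne_zero _ one_ne_zero,
        Finset.sum_singleton, Finsupp.single_eq_same]
    omega

lemma euler_fin2 [CommRing R] {φ : MvPolynomial (Fin 2) R} {n : ℕ} (h : φ.IsHomogeneous n) :
    C (n : R) * φ = X 0 * pderiv 0 φ + X 1 * pderiv 1 φ := by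
  classical
  have key : ∀ (i : Fin 2) (u : Fin 2 →₀ ℕ) (c : R),
      X i * pderiv i (monomial u c) = monomial u (c * (u i : R)) := by
    intro i u c
    rw [pderiv_monomial]
    by_cases hui : u i = 0
    · rw [hui]; simp
    · rw [X, monomial_mul, one_mul,
        add_tsub_cancel_of_le (Finsupp.single_le_iff.mpr (Nat.one_le_iff_ne_zero.mpr hui))]
  conv_lhs => rw [φ.as_sum]
  conv_rhs => rw [φ.as_sum]
  rw [map_sum (pderiv 0), map_sum (pderiv 1), Finset.mul_sum, Finset.mul_sum, Finset.mul_sum,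
    ← Finset.sum_add_distrib]
  refine Finset.sum_congr rfl fun u hu => ?_
  rw [key, key, C_mul_monomial, ← map_add]
  congr 1
  have hdu : u.degree = n := by
    have := h (mem_support_iff.mp hu)
    rwa [Finsupp.degree_eq_weight_one]
  have hsum : u 0 + u 1 = n := by
    have h2 : u.degree = u 0 + u 1 := by
      rw [Finsupp.degree_apply,
        show ∑ i ∈ u.support, u i = ∑ i : Fin 2, u i from
          Finset.sum_subset (Finset.subset_univ _)
            (fun x _ hx => Finsupp.notMem_support_iff.mp hx),
        Fin.sum_univ_two]
    omega
  rw [← hsum]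
  push_cast
  ring
end FormInf

/-- Structure of a differential form restricted to the line at infinity: if
`C` is a nonzero binary form of degree `d` with `(d : k) ≠ 0`, `P`, `Q` are
homogeneous of degree `s` with `∂ₓC·Q - ∂_yC·P = C·K`, and every common
divisor of `∂ₓC` and `∂_yC` has total degree at most `d - s - 2`, then
`Q = x·F`, `P = -y·F`, `K = d·F` for a binary form `F` of degree `s - 1`.
Consequently `ω` has exactly `s - 1` zeros at infinity, counted with
multiplicity. -/
theorem form_restricted_to_line_at_infinity
    {k : Type*} [Field k]
    (C : MvPolynomial (Fin 2) k) (d : ℕ)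
    (hC : C ≠ 0) (hhom : C.IsHomogeneous d) (hd : 1 ≤ d)
    (hdk : (d : k) ≠ 0)
    (s : ℕ) (P Q K : MvPolynomial (Fin 2) k)
    (hP : P.IsHomogeneous s) (hQ : Q.IsHomogeneous s)
    (hint : pderiv 0 C * Q - pderiv 1 C * P = C * K)
    (hgcd : ∀ g : MvPolynomial (Fin 2) k, g ∣ pderiv 0 C → g ∣ pderiv 1 C →
      (g.totalDegree : ℤ) ≤ (d : ℤ) - (s : ℤ) - 2) :
    ∃ F : MvPolynomial (Fin 2) k,
      F.IsHomogeneous (s - 1) ∧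
      Q = X 0 * F ∧
      P = -(X 1 * F) ∧
      K = (d : k) • F := by
  classical
  letI : NormalizationMonoid (MvPolynomial (Fin 2) k) :=
    (UniqueFactorizationMonoid.normalizationMonoid (α := MvPolynomial (Fin 2) k)).toNormalizationMonoid
  letI : GCDMonoid (MvPolynomial (Fin 2) k) :=
    UniqueFactorizationMonoid.toGCDMonoid _
  set A : MvPolynomial (Fin 2) k := pderiv 0 C with hAdef
  set B : MvPolynomial (Fin 2) k := pderiv 1 C with hBdef
  have hAh : A.IsHomogeneous (d - 1) := FormInf.pderiv_isHomogeneous hhom 0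
  have hBh : B.IsHomogeneous (d - 1) := FormInf.pderiv_isHomogeneous hhom 1
  have euler : MvPolynomial.C (d : k) * C = X 0 * A + X 1 * B := FormInf.euler_fin2 hhom
  have hCd : MvPolynomial.C (d : k) ≠ 0 := fun h => hdk (by
    have := MvPolynomial.C_injective (Fin 2) k (h.trans (map_zero _).symm)
    exact this)
  have hnotboth : ¬(A = 0 ∧ B = 0) := by
    rintro ⟨h0, h1⟩
    apply mul_ne_zero hCd hC
    rw [euler, h0, h1]; ring
  have hA0 : A ≠ 0 := by
    intro h0
    have hB0 : B ≠ 0 := fun h1 => hnotboth ⟨h0, h1⟩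
    have := hgcd B (h0 ▸ dvd_zero B) dvd_rfl
    rw [hBh.totalDegree hB0] at this
    omega
  have hB0 : B ≠ 0 := by
    intro h1
    have := hgcd A dvd_rfl (h1 ▸ dvd_zero A)
    rw [hAh.totalDegree hA0] at this
    omega
  set e : k := (d : k) with hedef
  -- homogeneity of K
  have hCK : (C * K).IsHomogeneous (d - 1 + s) := by
    rw [← hint]
    exact (hAh.mul hQ).sub (hBh.mul hP)
  have hKs : K.IsHomogeneous (s - 1) ∧ (K = 0 ∨ 1 ≤ s) := by
    rcases eq_or_ne K 0 with rfl | hK0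
    · exact ⟨isHomogeneous_zero _ _ _, Or.inl rfl⟩
    · obtain ⟨-, hKh, hadd⟩ := FormInf.isHomogeneous_of_mul_isHomogeneous hC hK0 hCK
      rw [hhom.totalDegree hC] at hadd
      have h1 : K.totalDegree = s - 1 := by omega
      have h2 : 1 ≤ s := by omega
      rw [h1] at hKh
      exact ⟨hKh, Or.inr h2⟩
  have hXK : ∀ i : Fin 2, (X i * K).IsHomogeneous s := by
    intro i
    rcases hKs.2 with h0 | hs
    · rw [h0, mul_zero]; exact isHomogeneous_zero _ _ _
    · have := (isHomogeneous_X k i).mul hKs.1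
      rwa [show 1 + (s - 1) = s by omega] at this
  have hUh : (MvPolynomial.C e * Q - X 0 * K).IsHomogeneous s := (hQ.C_mul e).sub (hXK 0)
  have hVh : (MvPolynomial.C e * P + X 1 * K).IsHomogeneous s := (hP.C_mul e).add (hXK 1)
  -- main identity
  have hmain : A * (MvPolynomial.C e * Q - X 0 * K) = B * (MvPolynomial.C e * P + X 1 * K) := by
    have heuler : MvPolynomial.C e * C = X 0 * A + X 1 * B := euler
    linear_combination (MvPolynomial.C e) * hint + K * heuler
  -- gcd setup
  obtain ⟨A', hA'⟩ := gcd_dvd_left A B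
  obtain ⟨B', hB'⟩ := gcd_dvd_right A B
  set g : MvPolynomial (Fin 2) k := gcd A B with hgdef
  have hg0 : g ≠ 0 := fun h => hA0 (by rw [hA', h, zero_mul])
  have hA'0 : A' ≠ 0 := fun h => hA0 (by rw [hA', h, mul_zero])
  have hB'0 : B' ≠ 0 := fun h => hB0 (by rw [hB', h, mul_zero])
  have hrel : IsRelPrime A' B' := by
    intro c hcA hcB
    have h1 : g * c ∣ A := by rw [hA']; exact mul_dvd_mul_left g hcA
    have h2 : g * c ∣ B := by rw [hB']; exact mul_dvd_mul_left g hcB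
    have h3 : g * c ∣ g * 1 := by rw [mul_one]; exact dvd_gcd h1 h2
    exact isUnit_of_dvd_one ((mul_dvd_mul_iff_left hg0).mp h3)
  have hgdeg : (g.totalDegree : ℤ) ≤ (d : ℤ) - (s : ℤ) - 2 :=
    hgcd g ⟨A', hA'⟩ ⟨B', hB'⟩
  have hdA' : s + 1 ≤ A'.totalDegree := by
    have h1 : A.totalDegree = d - 1 := hAh.totalDegree hA0
    have h2 : A.totalDegree ≤ g.totalDegree + A'.totalDegree := by
      rw [hA']; exact totalDegree_mul g A'
    omega
  have hdB' : s + 1 ≤ B'.totalDegree := by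
    have h1 : B.totalDegree = d - 1 := hBh.totalDegree hB0
    have h2 : B.totalDegree ≤ g.totalDegree + B'.totalDegree := by
      rw [hB']; exact totalDegree_mul g B'
    omega
  have hmain' : A' * (MvPolynomial.C e * Q - X 0 * K)
      = B' * (MvPolynomial.C e * P + X 1 * K) := by
    apply mul_left_cancel₀ hg0
    rw [← mul_assoc, ← mul_assoc, ← hA', ← hB']
    exact hmain
  have hU0 : MvPolynomial.C e * Q - X 0 * K = 0 := by
    by_contra hU0
    have hdvd : B' ∣ (MvPolynomial.C e * Q - X 0 * K) :=
      (hrel.symm).dvd_of_dvd_mul_left ⟨_, hmain'⟩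
    obtain ⟨W, hW⟩ := hdvd
    have hW0 : W ≠ 0 := fun h => hU0 (by rw [hW, h, mul_zero])
    have hmul := FormInf.totalDegree_mul_eq' hB'0 hW0
    rw [← hW] at hmul
    have hUs : (MvPolynomial.C e * Q - X 0 * K).totalDegree = s := hUh.totalDegree hU0
    omega
  have hV0 : MvPolynomial.C e * P + X 1 * K = 0 := by
    by_contra hV0
    have hdvd : A' ∣ (MvPolynomial.C e * P + X 1 * K) :=
      hrel.dvd_of_dvd_mul_left ⟨_, hmain'.symm⟩
    obtain ⟨W, hW⟩ := hdvd
    have hW0 : W ≠ 0 := fun h => hV0 (by rw [hW, h, mul_zero])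
    have hmul := FormInf.totalDegree_mul_eq' hA'0 hW0
    rw [← hW] at hmul
    have hVs : (MvPolynomial.C e * P + X 1 * K).totalDegree = s := hVh.totalDegree hV0
    omega
  -- conclusion
  have hee : MvPolynomial.C e * MvPolynomial.C e⁻¹ = (1 : MvPolynomial (Fin 2) k) := by
    rw [← MvPolynomial.C_mul, mul_inv_cancel₀ hdk, MvPolynomial.C_1]
  refine ⟨MvPolynomial.C e⁻¹ * K, hKs.1.C_mul e⁻¹, ?_, ?_, ?_⟩
  · linear_combination MvPolynomial.C e⁻¹ * hU0 - Q * hee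
  · linear_combination MvPolynomial.C e⁻¹ * hV0 - P * hee
  · rw [smul_eq_C_mul, ← mul_assoc, hee, one_mul]
end
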